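/- For every λ̄μμ̃-term t, the composite translation (t∘)† (first translating λ̄μμ̃ to λμ via (·)∘, then back via (·)†) reduces to t by zero or more linear λ̄μμ̃-reduction steps; the analogous statement holds for λ̄μμ̃-commands and λ̄μμ̃-contexts. -/

import Mathlib

set_option autoImplicit true

namespace CHSim

/-- Lift a de Bruijn renaming under a binder. -/
def upr (ξ : ℕ → ℕ) : ℕ → ℕ
  | 0 => 0
  | k+1 => ξ k + 1

/-! ## The λμ-calculus (de Bruijn representation).

λ-variables and μ-variables each have their own name space of de Bruijn
indices.  `abs t` is `λx.t` (binding λ-index 0) and `mabs c` is `μα.c`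
(binding μ-index 0); `cmd a t` is the command `[a]t`. -/

mutual
  inductive Tm : Type
    | var : ℕ → Tm
    | abs : Tm → Tm
    | app : Tm → Tm → Tm
    | mabs : Cm → Tm
  inductive Cm : Type
    | cmd : ℕ → Tm → Cm
end

/-- λμ-contexts `e ::= ⟨α⟩ | ⟨β⟩(t ·) | e · t`. -/
inductive Ct : Type
  | cvar : ℕ → Ct
  | push : ℕ → Tm → Ct
  | cons : Ct → Tm → Ct

/-- Filling a λμ-context with a term: `⟨α⟩⟨t⟩ = [α]t`,
`(⟨β⟩(u ·))⟨t⟩ = [β](u t)`, `(h · u)⟨t⟩ = h⟨t u⟩`. -/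
def fill : Ct → Tm → Cm
  | .cvar a, t => .cmd a t
  | .push b u, t => .cmd b (.app u t)
  | .cons h u, t => fill h (.app t u)

mutual
  /-- Renaming of λ-variables in λμ-terms. -/
  def renLT (ξ : ℕ → ℕ) : Tm → Tm
    | .var x => .var (ξ x)
    | .abs t => .abs (renLT (upr ξ) t)
    | .app t u => .app (renLT ξ t) (renLT ξ u)
    | .mabs c => .mabs (renLC ξ c)
  /-- Renaming of λ-variables in λμ-commands. -/
  def renLC (ξ : ℕ → ℕ) : Cm → Cm
    | .cmd a t => .cmd a (renLT ξ t)
end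

mutual
  /-- Renaming of μ-variables in λμ-terms. -/
  def renMT (ξ : ℕ → ℕ) : Tm → Tm
    | .var x => .var x
    | .abs t => .abs (renMT ξ t)
    | .app t u => .app (renMT ξ t) (renMT ξ u)
    | .mabs c => .mabs (renMC (upr ξ) c)
  /-- Renaming of μ-variables in λμ-commands. -/
  def renMC (ξ : ℕ → ℕ) : Cm → Cm
    | .cmd a t => .cmd (ξ a) (renMT ξ t)
end

/-- Renaming of λ-variables in λμ-contexts. -/
def renLE (ξ : ℕ → ℕ) : Ct → Ct
  | .cvar a => .cvar a
  | .push b t => .push b (renLT ξ t)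
  | .cons e t => .cons (renLE ξ e) (renLT ξ t)

/-- Renaming of μ-variables in λμ-contexts. -/
def renME (ξ : ℕ → ℕ) : Ct → Ct
  | .cvar a => .cvar (ξ a)
  | .push b t => .push (ξ b) (renMT ξ t)
  | .cons e t => .cons (renME ξ e) (renMT ξ t)

/-- Lifting a λ-substitution under a λ-binder. -/
def upsL (σ : ℕ → Tm) : ℕ → Tm
  | 0 => .var 0
  | k+1 => renLT Nat.succ (σ k)

mutual
  /-- (Capture-avoiding) substitution for λ-variables in λμ-terms. -/
  def lsubT (σ : ℕ → Tm) : Tm → Tm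
    | .var x => σ x
    | .abs t => .abs (lsubT (upsL σ) t)
    | .app t u => .app (lsubT σ t) (lsubT σ u)
    | .mabs c => .mabs (lsubC (fun k => renMT Nat.succ (σ k)) c)
  /-- Substitution for λ-variables in λμ-commands. -/
  def lsubC (σ : ℕ → Tm) : Cm → Cm
    | .cmd a t => .cmd a (lsubT σ t)
end

/-- Substitution for λ-variables in λμ-contexts. -/
def lsubE (σ : ℕ → Tm) : Ct → Ct
  | .cvar a => .cvar a
  | .push b t => .push b (lsubT σ t)
  | .cons e t => .cons (lsubE σ e) (lsubT σ t)

/-- The substitution replacing the λ-variable `x` by `u`. -/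
def sub1L (x : ℕ) (u : Tm) : ℕ → Tm := fun k => if k = x then u else .var k

/-- The β-substitution replacing the bound λ-variable 0 by `u`. -/
def sub0L (u : Tm) : ℕ → Tm
  | 0 => u
  | k+1 => .var k

/-- Lifting a structural (μ-)substitution under a μ-binder. -/
def upsM (σ : ℕ → Ct) : ℕ → Ct
  | 0 => .cvar 0
  | k+1 => renME Nat.succ (σ k)

mutual
  /-- Structural substitution of λμ-contexts for μ-variables in λμ-terms:
  every subcommand `[α]u` is replaced by `(σ α)⟨u[σ]⟩`. -/
  def msubT (σ : ℕ → Ct) : Tm → Tm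
    | .var x => .var x
    | .abs t => .abs (msubT (fun k => renLE Nat.succ (σ k)) t)
    | .app t u => .app (msubT σ t) (msubT σ u)
    | .mabs c => .mabs (msubC (upsM σ) c)
  /-- Structural substitution in λμ-commands. -/
  def msubC (σ : ℕ → Ct) : Cm → Cm
    | .cmd a t => fill (σ a) (msubT σ t)
end

/-- Structural substitution in λμ-contexts (the head variable of
`⟨β⟩(t ·)` is, by the freshness convention of the translations,
never the substituted variable, so it is left untouched). -/
def msubE (σ : ℕ → Ct) : Ct → Ct
  | .cvar a => σ a
  | .push b t => .push b (msubT σ t)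
  | .cons e t => .cons (msubE σ e) (msubT σ t)

/-- The structural substitution replacing the μ-variable `a` by the context `e`. -/
def sub1M (a : ℕ) (e : Ct) : ℕ → Ct := fun k => if k = a then e else .cvar k

/-- The structural substitution replacing the bound μ-variable 0 by the
context `e` (removing the binder). -/
def sub0M (e : Ct) : ℕ → Ct
  | 0 => e
  | k+1 => .cvar k

mutual
  /-- Number of free occurrences of the λ-variable `x` in a λμ-term. -/
  def cntLT (x : ℕ) : Tm → ℕ
    | .var y => if y = x then 1 else 0
    | .abs t => cntLT (x+1) t
    | .app t u => cntLT x t + cntLT x u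
    | .mabs c => cntLC x c
  /-- Number of free occurrences of the λ-variable `x` in a λμ-command. -/
  def cntLC (x : ℕ) : Cm → ℕ
    | .cmd _ t => cntLT x t
end

/-- λμ-values `v ::= x | λx.t`. -/
inductive IsVal : Tm → Prop
  | var (x : ℕ) : IsVal (.var x)
  | abs (t : Tm) : IsVal (.abs t)

/-! ### Reduction in λμ: congruence closure of root rules -/

mutual
  /-- Congruence (compatible) closure of root relations, term level. -/
  inductive KT (R1 : Tm → Tm → Prop) (R2 : Cm → Cm → Prop) : Tm → Tm → Prop
    | root {t t'} : R1 t t' → KT R1 R2 t t'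
    | absC {t t'} : KT R1 R2 t t' → KT R1 R2 (.abs t) (.abs t')
    | appL {t t'} (u) : KT R1 R2 t t' → KT R1 R2 (.app t u) (.app t' u)
    | appR (t) {u u'} : KT R1 R2 u u' → KT R1 R2 (.app t u) (.app t u')
    | mabsC {c c'} : KC R1 R2 c c' → KT R1 R2 (.mabs c) (.mabs c')
  /-- Congruence (compatible) closure of root relations, command level. -/
  inductive KC (R1 : Tm → Tm → Prop) (R2 : Cm → Cm → Prop) : Cm → Cm → Prop
    | root {c c'} : R2 c c' → KC R1 R2 c c'
    | cmdC (a) {t t'} : KT R1 R2 t t' → KC R1 R2 (.cmd a t) (.cmd a t')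
end

/-- Term-level root rules of the undirected λμ-calculus: β, μ, μ', θ. -/
inductive RootT : Tm → Tm → Prop
  | beta (u t : Tm) : RootT (.app (.abs u) t) (lsubT (sub0L t) u)
  | mu (c : Cm) (t : Tm) : RootT (.app (.mabs c) t)
      (.mabs (msubC (sub1M 0 (.cons (.cvar 0) (renMT Nat.succ t))) c))
  | mu' (t : Tm) (c : Cm) : RootT (.app t (.mabs c))
      (.mabs (msubC (sub1M 0 (.push 0 (renMT Nat.succ t))) c))
  | theta (t : Tm) : RootT (.mabs (.cmd 0 (renMT Nat.succ t))) t

/-- Command-level root rule of the λμ-calculus: ρ. -/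
inductive RootC : Cm → Cm → Prop
  | rho (b : ℕ) (c : Cm) : RootC (.cmd b (.mabs c)) (msubC (sub0M (.cvar b)) c)

/-- Term-level *linear* root rules of the λμ-calculus: θ, and β when the
argument is a variable or the bound variable occurs exactly once. -/
inductive RootTlin : Tm → Tm → Prop
  | beta (u t : Tm) : ((∃ y, t = Tm.var y) ∨ cntLT 0 u = 1) →
      RootTlin (.app (.abs u) t) (lsubT (sub0L t) u)
  | theta (t : Tm) : RootTlin (.mabs (.cmd 0 (renMT Nat.succ t))) t

/-- Term-level root rules of call-by-name λμ: β, μ, θ (no μ'). -/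
inductive RootTn : Tm → Tm → Prop
  | beta (u t : Tm) : RootTn (.app (.abs u) t) (lsubT (sub0L t) u)
  | mu (c : Cm) (t : Tm) : RootTn (.app (.mabs c) t)
      (.mabs (msubC (sub1M 0 (.cons (.cvar 0) (renMT Nat.succ t))) c))
  | theta (t : Tm) : RootTn (.mabs (.cmd 0 (renMT Nat.succ t))) t

/-- Term-level root rules of call-by-value λμ: βv, μv, μ', θ. -/
inductive RootTv : Tm → Tm → Prop
  | betav (u t : Tm) : IsVal t → RootTv (.app (.abs u) t) (lsubT (sub0L t) u)
  | muv (c : Cm) (t : Tm) : IsVal t → RootTv (.app (.mabs c) t)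
      (.mabs (msubC (sub1M 0 (.cons (.cvar 0) (renMT Nat.succ t))) c))
  | mu' (t : Tm) (c : Cm) : RootTv (.app t (.mabs c))
      (.mabs (msubC (sub1M 0 (.push 0 (renMT Nat.succ t))) c))
  | theta (t : Tm) : RootTv (.mabs (.cmd 0 (renMT Nat.succ t))) t

/-- Term-level *linear call-by-value* root rules of λμ. -/
inductive RootTvlin : Tm → Tm → Prop
  | betav (u t : Tm) : IsVal t → ((∃ y, t = Tm.var y) ∨ cntLT 0 u = 1) →
      RootTvlin (.app (.abs u) t) (lsubT (sub0L t) u)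
  | theta (t : Tm) : RootTvlin (.mabs (.cmd 0 (renMT Nat.succ t))) t

/-- One-step λμ-reduction (β, μ, μ', ρ, θ), terms. -/
abbrev StepT := KT RootT RootC
/-- One-step λμ-reduction (β, μ, μ', ρ, θ), commands. -/
abbrev StepC := KC RootT RootC
/-- One-step linear λμ-reduction, terms. -/
abbrev LStepT := KT RootTlin RootC
/-- One-step linear λμ-reduction, commands. -/
abbrev LStepC := KC RootTlin RootC
/-- One-step call-by-name λμ-reduction, terms. -/
abbrev StepNT := KT RootTn RootC
/-- One-step call-by-name λμ-reduction, commands. -/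
abbrev StepNC := KC RootTn RootC
/-- One-step call-by-value λμ-reduction, terms. -/
abbrev StepVT := KT RootTv RootC
/-- One-step call-by-value λμ-reduction, commands. -/
abbrev StepVC := KC RootTv RootC
/-- One-step linear call-by-value λμ-reduction, terms. -/
abbrev LStepVT := KT RootTvlin RootC
/-- One-step linear call-by-value λμ-reduction, commands. -/
abbrev LStepVC := KC RootTvlin RootC

/-- Reflexive-transitive closure. -/
abbrev Star {α : Type} (r : α → α → Prop) : α → α → Prop := Relation.ReflTransGen r

/-! ## The λ̄μμ̃-calculus (de Bruijn representation). -/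

mutual
  inductive BTm : Type
    | var : ℕ → BTm
    | abs : BTm → BTm
    | mabs : BCm → BTm
  inductive BCm : Type
    | cut : BTm → BCt → BCm
  inductive BCt : Type
    | cvar : ℕ → BCt
    | cons : BTm → BCt → BCt
    | tmu : BCm → BCt
end

mutual
  /-- Renaming of λ-variables in λ̄μμ̃-terms. -/
  def brenLT (ξ : ℕ → ℕ) : BTm → BTm
    | .var x => .var (ξ x)
    | .abs t => .abs (brenLT (upr ξ) t)
    | .mabs c => .mabs (brenLC ξ c)
  def brenLC (ξ : ℕ → ℕ) : BCm → BCm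
    | .cut t e => .cut (brenLT ξ t) (brenLE ξ e)
  def brenLE (ξ : ℕ → ℕ) : BCt → BCt
    | .cvar a => .cvar a
    | .cons t e => .cons (brenLT ξ t) (brenLE ξ e)
    | .tmu c => .tmu (brenLC (upr ξ) c)
end

mutual
  /-- Renaming of μ-variables in λ̄μμ̃-terms. -/
  def brenMT (ξ : ℕ → ℕ) : BTm → BTm
    | .var x => .var x
    | .abs t => .abs (brenMT ξ t)
    | .mabs c => .mabs (brenMC (upr ξ) c)
  def brenMC (ξ : ℕ → ℕ) : BCm → BCm
    | .cut t e => .cut (brenMT ξ t) (brenME ξ e)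
  def brenME (ξ : ℕ → ℕ) : BCt → BCt
    | .cvar a => .cvar (ξ a)
    | .cons t e => .cons (brenMT ξ t) (brenME ξ e)
    | .tmu c => .tmu (brenMC ξ c)
end

def bupsL (σ : ℕ → BTm) : ℕ → BTm
  | 0 => .var 0
  | k+1 => brenLT Nat.succ (σ k)

mutual
  /-- Substitution for λ-variables in λ̄μμ̃-terms. -/
  def blsubT (σ : ℕ → BTm) : BTm → BTm
    | .var x => σ x
    | .abs t => .abs (blsubT (bupsL σ) t)
    | .mabs c => .mabs (blsubC (fun k => brenMT Nat.succ (σ k)) c)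
  def blsubC (σ : ℕ → BTm) : BCm → BCm
    | .cut t e => .cut (blsubT σ t) (blsubE σ e)
  def blsubE (σ : ℕ → BTm) : BCt → BCt
    | .cvar a => .cvar a
    | .cons t e => .cons (blsubT σ t) (blsubE σ e)
    | .tmu c => .tmu (blsubC (bupsL σ) c)
end

def bsub1L (x : ℕ) (u : BTm) : ℕ → BTm := fun k => if k = x then u else .var k

def bsub0L (u : BTm) : ℕ → BTm
  | 0 => u
  | k+1 => .var k

def bupsM (σ : ℕ → BCt) : ℕ → BCt
  | 0 => .cvar 0
  | k+1 => brenME Nat.succ (σ k)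

mutual
  /-- Structural substitution of contexts for μ-variables in λ̄μμ̃-terms. -/
  def bmsubT (σ : ℕ → BCt) : BTm → BTm
    | .var x => .var x
    | .abs t => .abs (bmsubT (fun k => brenLE Nat.succ (σ k)) t)
    | .mabs c => .mabs (bmsubC (bupsM σ) c)
  def bmsubC (σ : ℕ → BCt) : BCm → BCm
    | .cut t e => .cut (bmsubT σ t) (bmsubE σ e)
  def bmsubE (σ : ℕ → BCt) : BCt → BCt
    | .cvar a => σ a
    | .cons t e => .cons (bmsubT σ t) (bmsubE σ e)
    | .tmu c => .tmu (bmsubC (fun k => brenLE Nat.succ (σ k)) c)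
end

def bsub1M (a : ℕ) (e : BCt) : ℕ → BCt := fun k => if k = a then e else .cvar k

def bsub0M (e : BCt) : ℕ → BCt
  | 0 => e
  | k+1 => .cvar k

mutual
  /-- Number of free occurrences of the λ-variable `x` in a λ̄μμ̃-term. -/
  def bcntLT (x : ℕ) : BTm → ℕ
    | .var y => if y = x then 1 else 0
    | .abs t => bcntLT (x+1) t
    | .mabs c => bcntLC x c
  def bcntLC (x : ℕ) : BCm → ℕ
    | .cut t e => bcntLT x t + bcntLE x e
  def bcntLE (x : ℕ) : BCt → ℕ
    | .cvar _ => 0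
    | .cons t e => bcntLT x t + bcntLE x e
    | .tmu c => bcntLC (x+1) c
end

mutual
  /-- Number of free occurrences of the μ-variable `a` in a λ̄μμ̃-term. -/
  def bcntMT (a : ℕ) : BTm → ℕ
    | .var _ => 0
    | .abs t => bcntMT a t
    | .mabs c => bcntMC (a+1) c
  def bcntMC (a : ℕ) : BCm → ℕ
    | .cut t e => bcntMT a t + bcntME a e
  def bcntME (a : ℕ) : BCt → ℕ
    | .cvar b => if b = a then 1 else 0
    | .cons t e => bcntMT a t + bcntME a e
    | .tmu c => bcntMC a c
end

/-- λ̄μμ̃-values `v ::= x | λx.t`. -/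
inductive BIsVal : BTm → Prop
  | var (x : ℕ) : BIsVal (.var x)
  | abs (t : BTm) : BIsVal (.abs t)

/-- Stacks (the contexts of λ̄μμ̃_T): `s ::= α | t · s`. -/
inductive IsStk : BCt → Prop
  | cvar (a : ℕ) : IsStk (.cvar a)
  | cons (t : BTm) {s : BCt} : IsStk s → IsStk (.cons t s)

/-! ### Reduction in λ̄μμ̃: congruence closure of root rules -/

mutual
  inductive JT (R1 : BTm → BTm → Prop) (R2 : BCm → BCm → Prop) : BTm → BTm → Prop
    | root {t t'} : R1 t t' → JT R1 R2 t t'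
    | absC {t t'} : JT R1 R2 t t' → JT R1 R2 (.abs t) (.abs t')
    | mabsC {c c'} : JC R1 R2 c c' → JT R1 R2 (.mabs c) (.mabs c')
  inductive JC (R1 : BTm → BTm → Prop) (R2 : BCm → BCm → Prop) : BCm → BCm → Prop
    | root {c c'} : R2 c c' → JC R1 R2 c c'
    | cutL {t t'} (e) : JT R1 R2 t t' → JC R1 R2 (.cut t e) (.cut t' e)
    | cutR (t) {e e'} : JE R1 R2 e e' → JC R1 R2 (.cut t e) (.cut t e')
  inductive JE (R1 : BTm → BTm → Prop) (R2 : BCm → BCm → Prop) : BCt → BCt → Prop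
    | consL {t t'} (e) : JT R1 R2 t t' → JE R1 R2 (.cons t e) (.cons t' e)
    | consR (t) {e e'} : JE R1 R2 e e' → JE R1 R2 (.cons t e) (.cons t e')
    | tmuC {c c'} : JC R1 R2 c c' → JE R1 R2 (.tmu c) (.tmu c')
end

/-- The term-level root rule of λ̄μμ̃: θ (shared by all evaluation disciplines). -/
inductive BRootT : BTm → BTm → Prop
  | theta (t : BTm) : BRootT (.mabs (.cut (brenMT Nat.succ t) (.cvar 0))) t

/-- Command-level root rules of the undirected λ̄μμ̃-calculus: β, μ, μ̃. -/
inductive BRootC : BCm → BCm → Prop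
  | beta (u t : BTm) (e : BCt) :
      BRootC (.cut (.abs u) (.cons t e)) (.cut t (.tmu (.cut u (brenLE Nat.succ e))))
  | mu (c : BCm) (e : BCt) : BRootC (.cut (.mabs c) e) (bmsubC (bsub0M e) c)
  | mutilde (t : BTm) (c : BCm) : BRootC (.cut t (.tmu c)) (blsubC (bsub0L t) c)

/-- Command-level *linear* root rules of λ̄μμ̃: β always; μ (resp. μ̃) when the
substituted context (resp. term) is a variable or the bound variable occurs
exactly once in the command. -/
inductive BRootClin : BCm → BCm → Prop
  | beta (u t : BTm) (e : BCt) :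
      BRootClin (.cut (.abs u) (.cons t e)) (.cut t (.tmu (.cut u (brenLE Nat.succ e))))
  | mu (c : BCm) (e : BCt) : ((∃ a, e = BCt.cvar a) ∨ bcntMC 0 c = 1) →
      BRootClin (.cut (.mabs c) e) (bmsubC (bsub0M e) c)
  | mutilde (t : BTm) (c : BCm) : ((∃ x, t = BTm.var x) ∨ bcntLC 0 c = 1) →
      BRootClin (.cut t (.tmu c)) (blsubC (bsub0L t) c)

/-- Command-level root rules of call-by-name λ̄μμ̃ (λ̄μμ̃_T): β, μₙ (stacks), μ̃. -/
inductive BRootCn : BCm → BCm → Prop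
  | beta (u t : BTm) (e : BCt) :
      BRootCn (.cut (.abs u) (.cons t e)) (.cut t (.tmu (.cut u (brenLE Nat.succ e))))
  | mun (c : BCm) (s : BCt) : IsStk s → BRootCn (.cut (.mabs c) s) (bmsubC (bsub0M s) c)
  | mutilde (t : BTm) (c : BCm) : BRootCn (.cut t (.tmu c)) (blsubC (bsub0L t) c)

/-- Command-level *linear call-by-name* root rules of λ̄μμ̃. -/
inductive BRootCnlin : BCm → BCm → Prop
  | beta (u t : BTm) (e : BCt) :
      BRootCnlin (.cut (.abs u) (.cons t e)) (.cut t (.tmu (.cut u (brenLE Nat.succ e))))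
  | mun (c : BCm) (s : BCt) : IsStk s → ((∃ a, s = BCt.cvar a) ∨ bcntMC 0 c = 1) →
      BRootCnlin (.cut (.mabs c) s) (bmsubC (bsub0M s) c)
  | mutilde (t : BTm) (c : BCm) : ((∃ x, t = BTm.var x) ∨ bcntLC 0 c = 1) →
      BRootCnlin (.cut t (.tmu c)) (blsubC (bsub0L t) c)

/-- Command-level root rules of call-by-value λ̄μμ̃ (λ̄μμ̃_Q): β, μ, μ̃ᵥ (values). -/
inductive BRootCv : BCm → BCm → Prop
  | beta (u t : BTm) (e : BCt) :
      BRootCv (.cut (.abs u) (.cons t e)) (.cut t (.tmu (.cut u (brenLE Nat.succ e))))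
  | mu (c : BCm) (e : BCt) : BRootCv (.cut (.mabs c) e) (bmsubC (bsub0M e) c)
  | mutildev (v : BTm) (c : BCm) : BIsVal v →
      BRootCv (.cut v (.tmu c)) (blsubC (bsub0L v) c)

/-- Command-level *linear call-by-value* root rules of λ̄μμ̃. -/
inductive BRootCvlin : BCm → BCm → Prop
  | beta (u t : BTm) (e : BCt) :
      BRootCvlin (.cut (.abs u) (.cons t e)) (.cut t (.tmu (.cut u (brenLE Nat.succ e))))
  | mu (c : BCm) (e : BCt) : ((∃ a, e = BCt.cvar a) ∨ bcntMC 0 c = 1) →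
      BRootCvlin (.cut (.mabs c) e) (bmsubC (bsub0M e) c)
  | mutildev (v : BTm) (c : BCm) : BIsVal v → ((∃ x, v = BTm.var x) ∨ bcntLC 0 c = 1) →
      BRootCvlin (.cut v (.tmu c)) (blsubC (bsub0L v) c)

/-- Command-level root rules with β' instead of β: β', μ, μ̃. -/
inductive BRootCp : BCm → BCm → Prop
  | beta' (u t : BTm) (e : BCt) :
      BRootCp (.cut (.abs u) (.cons t e)) (.cut (blsubT (bsub0L t) u) e)
  | mu (c : BCm) (e : BCt) : BRootCp (.cut (.mabs c) e) (bmsubC (bsub0M e) c)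
  | mutilde (t : BTm) (c : BCm) : BRootCp (.cut t (.tmu c)) (blsubC (bsub0L t) c)

/-- Command-level call-by-name root rules with β': β', μₙ, μ̃. -/
inductive BRootCnp : BCm → BCm → Prop
  | beta' (u t : BTm) (e : BCt) :
      BRootCnp (.cut (.abs u) (.cons t e)) (.cut (blsubT (bsub0L t) u) e)
  | mun (c : BCm) (s : BCt) : IsStk s → BRootCnp (.cut (.mabs c) s) (bmsubC (bsub0M s) c)
  | mutilde (t : BTm) (c : BCm) : BRootCnp (.cut t (.tmu c)) (blsubC (bsub0L t) c)

/-- Command-level call-by-value root rules with β': β' (values), μ, μ̃ᵥ. -/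
inductive BRootCvp : BCm → BCm → Prop
  | beta' (u v : BTm) (e : BCt) : BIsVal v →
      BRootCvp (.cut (.abs u) (.cons v e)) (.cut (blsubT (bsub0L v) u) e)
  | mu (c : BCm) (e : BCt) : BRootCvp (.cut (.mabs c) e) (bmsubC (bsub0M e) c)
  | mutildev (v : BTm) (c : BCm) : BIsVal v →
      BRootCvp (.cut v (.tmu c)) (blsubC (bsub0L v) c)

/-- One-step λ̄μμ̃-reduction (β, μ, μ̃, θ), terms. -/
abbrev BStepT := JT BRootT BRootC
abbrev BStepC := JC BRootT BRootC
abbrev BStepE := JE BRootT BRootC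
/-- One-step linear λ̄μμ̃-reduction. -/
abbrev LBStepT := JT BRootT BRootClin
abbrev LBStepC := JC BRootT BRootClin
abbrev LBStepE := JE BRootT BRootClin
/-- One-step call-by-name λ̄μμ̃-reduction. -/
abbrev BStepNT := JT BRootT BRootCn
abbrev BStepNC := JC BRootT BRootCn
abbrev BStepNE := JE BRootT BRootCn
/-- One-step linear call-by-name λ̄μμ̃-reduction. -/
abbrev LBStepNT := JT BRootT BRootCnlin
abbrev LBStepNC := JC BRootT BRootCnlin
/-- One-step call-by-value λ̄μμ̃-reduction. -/
abbrev BStepVT := JT BRootT BRootCv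
abbrev BStepVC := JC BRootT BRootCv
/-- One-step linear call-by-value λ̄μμ̃-reduction. -/
abbrev LBStepVT := JT BRootT BRootCvlin
abbrev LBStepVC := JC BRootT BRootCvlin
/-- One-step λ̄μμ̃-reduction with β' (β', μ, μ̃, θ). -/
abbrev BStepPT := JT BRootT BRootCp
abbrev BStepPC := JC BRootT BRootCp
/-- One-step call-by-name λ̄μμ̃-reduction with β'. -/
abbrev BStepNPT := JT BRootT BRootCnp
abbrev BStepNPC := JC BRootT BRootCnp
/-- One-step call-by-value λ̄μμ̃-reduction with β'. -/
abbrev BStepVPT := JT BRootT BRootCvp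
abbrev BStepVPC := JC BRootT BRootCvp

/-! ## The translation `(·)†` from λμ to λ̄μμ̃ -/

mutual
  /-- `x† = x`, `(λx.u)† = λx.u†`, `(u v)† = μβ.⟨v† | μ̃y.⟨u† | y·β⟩⟩`
  (`y`, `β` fresh, realized by de Bruijn lifting), `(μα.c)† = μα.c†`. -/
  def dagT : Tm → BTm
    | .var x => .var x
    | .abs t => .abs (dagT t)
    | .app u v => .mabs (.cut (brenMT Nat.succ (dagT v))
        (.tmu (.cut (brenLT Nat.succ (brenMT Nat.succ (dagT u)))
          (.cons (.var 0) (.cvar 0)))))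
    | .mabs c => .mabs (dagC c)
  /-- `([α]t)† = ⟨t† | α⟩`. -/
  def dagC : Cm → BCm
    | .cmd a t => .cut (dagT t) (.cvar a)
end

/-- `⟨α⟩† = α`, `(⟨β⟩(t ·))† = μ̃y.⟨t† | y·β⟩`, `(h · t)† = t† · h†`. -/
def dagE : Ct → BCt
  | .cvar a => .cvar a
  | .push b t => .tmu (.cut (brenLT Nat.succ (dagT t)) (.cons (.var 0) (.cvar b)))
  | .cons e t => .cons (dagT t) (dagE e)

/-! ## The translation `(·)∘` from λ̄μμ̃ to λμ -/

mutual
  /-- `x∘ = x`, `(λx.u)∘ = λx.u∘`, `(μα.c)∘ = μα.c∘`. -/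
  def circT : BTm → Tm
    | .var x => .var x
    | .abs t => .abs (circT t)
    | .mabs c => .mabs (circC c)
  /-- `⟨t | e⟩∘ = e∘⟨t∘⟩`. -/
  def circC : BCm → Cm
    | .cut t e => fill (circE e) (circT t)
  /-- `α∘ = ⟨α⟩`, `(t · h)∘ = h∘ · t∘`,
  `(μ̃x.c)∘ = ⟨β⟩((λx.μδ.c∘) ·)` with `δ ∉ c` (realized by lifting). -/
  def circE : BCt → Ct
    | .cvar a => .cvar a
    | .cons t e => .cons (circE e) (circT t)
    | .tmu c => .push 0 (.abs (.mabs (renMC Nat.succ (circC c))))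
end

/-! Both translations are compositional, and on variables, λ-abstractions, μ-abstractions and
stacks `t · e` the round trip is literally the identity. A cut `⟨t | e⟩` becomes `e∘⟨t∘⟩`;
translating a filled context back unwinds its spine, each application `(u v)†` in a context `E`
being removed by a μ-step followed by a μ̃-step, so that `(e∘⟨t∘⟩)†` reduces to `⟨t∘† | e∘†⟩`.
Finally `μ̃x.c` comes back as `μ̃y.⟨λx.μδ.c | y · β⟩`, which collapses to `μ̃x.c` by β, μ̃ and μ.
All these steps are linear: each μ- or μ̃-step substitutes a variable or binds one of the fresh
variables introduced by `(·)†`, which occur exactly once. -/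

theorem upr_ne_succ {ξ : ℕ → ℕ} {a : ℕ} (h : ∀ k, ξ k ≠ a) : ∀ k, upr ξ k ≠ a + 1
  | 0 => by simp [upr]
  | k + 1 => by simpa [upr] using h k

mutual
theorem brenMT_brenMT : ∀ (t : BTm) (ξ ζ : ℕ → ℕ),
    brenMT ξ (brenMT ζ t) = brenMT (fun k => ξ (ζ k)) t
  | .var _, _, _ => rfl
  | .abs t, ξ, ζ => by simp [brenMT, brenMT_brenMT t]
  | .mabs c, ξ, ζ => by
      simp only [brenMT, brenMC_brenMC c]
      congr 3; funext k; cases k <;> rfl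
theorem brenMC_brenMC : ∀ (c : BCm) (ξ ζ : ℕ → ℕ),
    brenMC ξ (brenMC ζ c) = brenMC (fun k => ξ (ζ k)) c
  | .cut t e, ξ, ζ => by simp [brenMC, brenMT_brenMT t, brenME_brenME e]
theorem brenME_brenME : ∀ (e : BCt) (ξ ζ : ℕ → ℕ),
    brenME ξ (brenME ζ e) = brenME (fun k => ξ (ζ k)) e
  | .cvar _, _, _ => rfl
  | .cons t e, ξ, ζ => by simp [brenME, brenMT_brenMT t, brenME_brenME e]
  | .tmu c, ξ, ζ => by simp [brenME, brenMC_brenMC c]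
end

mutual
theorem brenMT_brenLT : ∀ (t : BTm) (ζ ξ : ℕ → ℕ),
    brenMT ζ (brenLT ξ t) = brenLT ξ (brenMT ζ t)
  | .var _, _, _ => rfl
  | .abs t, ζ, ξ => by simp [brenMT, brenLT, brenMT_brenLT t]
  | .mabs c, ζ, ξ => by simp [brenMT, brenLT, brenMC_brenLC c]
theorem brenMC_brenLC : ∀ (c : BCm) (ζ ξ : ℕ → ℕ),
    brenMC ζ (brenLC ξ c) = brenLC ξ (brenMC ζ c)
  | .cut t e, ζ, ξ => by simp [brenMC, brenLC, brenMT_brenLT t, brenME_brenLE e]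
theorem brenME_brenLE : ∀ (e : BCt) (ζ ξ : ℕ → ℕ),
    brenME ζ (brenLE ξ e) = brenLE ξ (brenME ζ e)
  | .cvar _, _, _ => rfl
  | .cons t e, ζ, ξ => by simp [brenME, brenLE, brenMT_brenLT t, brenME_brenLE e]
  | .tmu c, ζ, ξ => by simp [brenME, brenLE, brenMC_brenLC c]
end

mutual
theorem bmsubT_brenMT_eq_self : ∀ (t : BTm) {σ : ℕ → BCt} {ξ : ℕ → ℕ},
    (∀ k, σ (ξ k) = .cvar k) → bmsubT σ (brenMT ξ t) = t
  | .var _, _, _, _ => rfl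
  | .abs t, _, _, h => by
      simp only [brenMT, bmsubT]
      rw [bmsubT_brenMT_eq_self t (fun k => by simp [h k, brenLE])]
  | .mabs c, _, _, h => by
      simp only [brenMT, bmsubT]
      rw [bmsubC_brenMC_eq_self c (fun k => by cases k <;> simp [upr, bupsM, h, brenME])]
theorem bmsubC_brenMC_eq_self : ∀ (c : BCm) {σ : ℕ → BCt} {ξ : ℕ → ℕ},
    (∀ k, σ (ξ k) = .cvar k) → bmsubC σ (brenMC ξ c) = c
  | .cut t e, _, _, h => by
      simp only [brenMC, bmsubC, bmsubT_brenMT_eq_self t h, bmsubE_brenME_eq_self e h]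
theorem bmsubE_brenME_eq_self : ∀ (e : BCt) {σ : ℕ → BCt} {ξ : ℕ → ℕ},
    (∀ k, σ (ξ k) = .cvar k) → bmsubE σ (brenME ξ e) = e
  | .cvar a, _, _, h => h a
  | .cons t e, _, _, h => by
      simp only [brenME, bmsubE, bmsubT_brenMT_eq_self t h, bmsubE_brenME_eq_self e h]
  | .tmu c, _, _, h => by
      simp only [brenME, bmsubE]
      rw [bmsubC_brenMC_eq_self c (fun k => by simp [h k, brenLE])]
end

mutual
theorem blsubT_brenLT_eq_self : ∀ (t : BTm) {σ : ℕ → BTm} {ξ : ℕ → ℕ},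
    (∀ k, σ (ξ k) = .var k) → blsubT σ (brenLT ξ t) = t
  | .var x, _, _, h => h x
  | .abs t, _, _, h => by
      simp only [brenLT, blsubT]
      rw [blsubT_brenLT_eq_self t (fun k => by cases k <;> simp [upr, bupsL, h, brenLT])]
  | .mabs c, _, _, h => by
      simp only [brenLT, blsubT]
      rw [blsubC_brenLC_eq_self c (fun k => by simp [h k, brenMT])]
theorem blsubC_brenLC_eq_self : ∀ (c : BCm) {σ : ℕ → BTm} {ξ : ℕ → ℕ},
    (∀ k, σ (ξ k) = .var k) → blsubC σ (brenLC ξ c) = c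
  | .cut t e, _, _, h => by
      simp only [brenLC, blsubC, blsubT_brenLT_eq_self t h, blsubE_brenLE_eq_self e h]
theorem blsubE_brenLE_eq_self : ∀ (e : BCt) {σ : ℕ → BTm} {ξ : ℕ → ℕ},
    (∀ k, σ (ξ k) = .var k) → blsubE σ (brenLE ξ e) = e
  | .cvar _, _, _, _ => rfl
  | .cons t e, _, _, h => by
      simp only [brenLE, blsubE, blsubT_brenLT_eq_self t h, blsubE_brenLE_eq_self e h]
  | .tmu c, _, _, h => by
      simp only [brenLE, blsubE]
      rw [blsubC_brenLC_eq_self c (fun k => by cases k <;> simp [upr, bupsL, h, brenLT])]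
end

mutual
theorem bcntMT_brenMT_eq_zero : ∀ (t : BTm) {ξ : ℕ → ℕ} {a : ℕ}, (∀ k, ξ k ≠ a) →
    bcntMT a (brenMT ξ t) = 0
  | .var _, _, _, _ => rfl
  | .abs t, _, _, h => bcntMT_brenMT_eq_zero t h
  | .mabs c, _, _, h => bcntMC_brenMC_eq_zero c (upr_ne_succ h)
theorem bcntMC_brenMC_eq_zero : ∀ (c : BCm) {ξ : ℕ → ℕ} {a : ℕ}, (∀ k, ξ k ≠ a) →
    bcntMC a (brenMC ξ c) = 0
  | .cut t e, _, _, h => by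
      simp [brenMC, bcntMC, bcntMT_brenMT_eq_zero t h, bcntME_brenME_eq_zero e h]
theorem bcntME_brenME_eq_zero : ∀ (e : BCt) {ξ : ℕ → ℕ} {a : ℕ}, (∀ k, ξ k ≠ a) →
    bcntME a (brenME ξ e) = 0
  | .cvar b, _, _, h => by simp [brenME, bcntME, h b]
  | .cons t e, _, _, h => by
      simp [brenME, bcntME, bcntMT_brenMT_eq_zero t h, bcntME_brenME_eq_zero e h]
  | .tmu c, _, _, h => bcntMC_brenMC_eq_zero c h
end

mutual
theorem bcntLT_brenLT_eq_zero : ∀ (t : BTm) {ξ : ℕ → ℕ} {a : ℕ}, (∀ k, ξ k ≠ a) →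
    bcntLT a (brenLT ξ t) = 0
  | .var x, _, _, h => by simp [brenLT, bcntLT, h x]
  | .abs t, _, _, h => bcntLT_brenLT_eq_zero t (upr_ne_succ h)
  | .mabs c, _, _, h => bcntLC_brenLC_eq_zero c h
theorem bcntLC_brenLC_eq_zero : ∀ (c : BCm) {ξ : ℕ → ℕ} {a : ℕ}, (∀ k, ξ k ≠ a) →
    bcntLC a (brenLC ξ c) = 0
  | .cut t e, _, _, h => by
      simp [brenLC, bcntLC, bcntLT_brenLT_eq_zero t h, bcntLE_brenLE_eq_zero e h]
theorem bcntLE_brenLE_eq_zero : ∀ (e : BCt) {ξ : ℕ → ℕ} {a : ℕ}, (∀ k, ξ k ≠ a) →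
    bcntLE a (brenLE ξ e) = 0
  | .cvar _, _, _, _ => rfl
  | .cons t e, _, _, h => by
      simp [brenLE, bcntLE, bcntLT_brenLT_eq_zero t h, bcntLE_brenLE_eq_zero e h]
  | .tmu c, _, _, h => bcntLC_brenLC_eq_zero c (upr_ne_succ h)
end

mutual
theorem dagT_renMT : ∀ (t : Tm) (ξ : ℕ → ℕ), dagT (renMT ξ t) = brenMT ξ (dagT t)
  | .var _, _ => rfl
  | .abs t, ξ => by simp [renMT, dagT, brenMT, dagT_renMT t]
  | .app u v, ξ => by
      simp only [renMT, dagT, brenMT, brenMC, brenME, dagT_renMT u, dagT_renMT v,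
        brenMT_brenMT, brenMT_brenLT, upr]
  | .mabs c, ξ => by simp [renMT, dagT, brenMT, dagC_renMC c]
theorem dagC_renMC : ∀ (c : Cm) (ξ : ℕ → ℕ), dagC (renMC ξ c) = brenMC ξ (dagC c)
  | .cmd a t, ξ => by simp [renMC, dagC, brenMC, brenME, dagT_renMT t]
end

section Congruence

variable {R1 : BTm → BTm → Prop} {R2 : BCm → BCm → Prop}

theorem star_abs {t t' : BTm} (h : Star (JT R1 R2) t t') :
    Star (JT R1 R2) (.abs t) (.abs t') :=
  h.lift BTm.abs fun _ _ => JT.absC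

theorem star_mabs {c c' : BCm} (h : Star (JC R1 R2) c c') :
    Star (JT R1 R2) (.mabs c) (.mabs c') :=
  h.lift BTm.mabs fun _ _ => JT.mabsC

theorem star_tmu {c c' : BCm} (h : Star (JC R1 R2) c c') :
    Star (JE R1 R2) (.tmu c) (.tmu c') :=
  h.lift BCt.tmu fun _ _ => JE.tmuC

theorem star_cut {t t' : BTm} {e e' : BCt} (ht : Star (JT R1 R2) t t')
    (he : Star (JE R1 R2) e e') : Star (JC R1 R2) (.cut t e) (.cut t' e') :=
  (ht.lift (BCm.cut · e) fun _ _ => JC.cutL e).trans (he.lift (BCm.cut t') fun _ _ => JC.cutR t')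

theorem star_cons {t t' : BTm} {e e' : BCt} (ht : Star (JT R1 R2) t t')
    (he : Star (JE R1 R2) e e') : Star (JE R1 R2) (.cons t e) (.cons t' e') :=
  (ht.lift (BCt.cons · e) fun _ _ => JE.consL e).trans
    (he.lift (BCt.cons t') fun _ _ => JE.consR t')

end Congruence

theorem lbstepC_dagT_app_mu (u v : Tm) (e : BCt) :
    LBStepC (.cut (dagT (.app u v)) e)
      (.cut (dagT v)
        (.tmu (.cut (brenLT Nat.succ (dagT u)) (.cons (.var 0) (brenLE Nat.succ e))))) := by
  simp only [dagT, ← brenMT_brenLT]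
  have hlin : bcntMC 0 (.cut (brenMT Nat.succ (dagT v)) (.tmu (.cut
      (brenMT Nat.succ (brenLT Nat.succ (dagT u))) (.cons (.var 0) (.cvar 0))))) = 1 := by
    simp [bcntMC, bcntMT, bcntME, bcntMT_brenMT_eq_zero _ Nat.succ_ne_zero]
  convert JC.root (BRootClin.mu _ e (.inr hlin)) using 1
  simp only [bmsubC, bmsubE, bmsubT]
  rw [bmsubT_brenMT_eq_self (σ := bsub0M e) _ fun _ => rfl,
    bmsubT_brenMT_eq_self _ fun _ => by simp [bsub0M, brenLE]]
  rfl

theorem lbstepC_mutilde_cons (t v : BTm) (e : BCt) :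
    LBStepC (.cut v (.tmu (.cut (brenLT Nat.succ t) (.cons (.var 0) (brenLE Nat.succ e)))))
      (.cut t (.cons v e)) := by
  have hlin : bcntLC 0 (.cut (brenLT Nat.succ t) (.cons (.var 0) (brenLE Nat.succ e))) = 1 := by
    simp [bcntLC, bcntLT, bcntLE, bcntLT_brenLT_eq_zero _ Nat.succ_ne_zero,
      bcntLE_brenLE_eq_zero _ Nat.succ_ne_zero]
  convert JC.root (BRootClin.mutilde v _ (.inr hlin)) using 1
  simp only [blsubC, blsubE, blsubT]
  rw [blsubT_brenLT_eq_self (σ := bsub0L v) _ fun _ => rfl,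
    blsubE_brenLE_eq_self (σ := bsub0L v) _ fun _ => rfl]
  rfl

theorem dagC_fill_star : ∀ (E : Ct) (t : Tm),
    Star LBStepC (dagC (fill E t)) (.cut (dagT t) (dagE E))
  | .cvar _, _ => .refl
  | .push b u, t => .single (lbstepC_dagT_app_mu u t (.cvar b))
  | .cons h u, t => ((dagC_fill_star h (.app t u)).tail (lbstepC_dagT_app_mu t u _)).tail
      (lbstepC_mutilde_cons _ _ _)

/-- With names: `μ̃y.⟨λx.μδ.c | y · β⟩ →β μ̃y.⟨y | μ̃x.⟨μδ.c | β⟩⟩ →μ̃ μ̃x.⟨μδ.c | β⟩ →μ μ̃x.c`,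
the μ̃-step substituting a variable and the μ-step one with no occurrence. -/
theorem dagE_push_abs_mabs_star (c : Cm) :
    Star LBStepE (dagE (.push 0 (.abs (.mabs (renMC Nat.succ c))))) (.tmu (dagC c)) := by
  have hbeta (u : BTm) : LBStepC (.cut (.abs u) (.cons (.var 0) (.cvar 0)))
      (.cut (.var 0) (.tmu (.cut u (.cvar 0)))) :=
    JC.root (BRootClin.beta u (.var 0) (.cvar 0))
  have hmutilde (d : BCm) :
      LBStepC (.cut (.var 0) (.tmu (.cut (.mabs (brenLC (upr Nat.succ) d)) (.cvar 0))))
        (.cut (.mabs d) (.cvar 0)) := by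
    convert JC.root (BRootClin.mutilde (.var 0) _ (.inl ⟨0, rfl⟩)) using 1
    simp only [blsubC, blsubE, blsubT]
    rw [blsubC_brenLC_eq_self _ fun k => by cases k <;> rfl]
  have hmu : LBStepC (.cut (.mabs (brenMC Nat.succ (dagC c))) (.cvar 0)) (dagC c) := by
    convert JC.root (BRootClin.mu _ (.cvar 0) (.inl ⟨0, rfl⟩)) using 1
    exact (bmsubC_brenMC_eq_self (σ := bsub0M (.cvar 0)) _ fun _ => rfl).symm
  simp only [dagE, dagT, dagC_renMC, brenLT]
  exact .head (JE.tmuC (hbeta _)) (.head (JE.tmuC (hmutilde _)) (.single (JE.tmuC hmu)))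

mutual
theorem dagT_circT_star : ∀ t : BTm, Star LBStepT (dagT (circT t)) t
  | .var _ => .refl
  | .abs t => star_abs (dagT_circT_star t)
  | .mabs c => star_mabs (dagC_circC_star c)
theorem dagC_circC_star : ∀ c : BCm, Star LBStepC (dagC (circC c)) c
  | .cut t e => (dagC_fill_star (circE e) (circT t)).trans
      (star_cut (dagT_circT_star t) (dagE_circE_star e))
theorem dagE_circE_star : ∀ e : BCt, Star LBStepE (dagE (circE e)) e
  | .cvar _ => .refl
  | .cons t e => star_cons (dagT_circT_star t) (dagE_circE_star e)
  | .tmu c => (dagE_push_abs_mabs_star (circC c)).trans (star_tmu (dagC_circC_star c))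
end

/-- for every λ̄μμ̃-term `t`, `(t∘)†` reduces to `t` by zero or
more linear λ̄μμ̃-reduction steps, and analogously for λ̄μμ̃-commands and
λ̄μμ̃-contexts. -/
theorem circ_dag_composition :
    (∀ t : BTm, Star LBStepT (dagT (circT t)) t) ∧
    (∀ c : BCm, Star LBStepC (dagC (circC c)) c) ∧
    (∀ e : BCt, Star LBStepE (dagE (circE e)) e) :=
  ⟨dagT_circT_star, dagC_circC_star, dagE_circE_star⟩

end CHSim
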